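/- arXiv:0803.3665 — 2 statements merged into one kernel-verified Lean document; each statement's English description precedes it below -/
import Mathlib

section
/- Let 0 < H < 1 and T > 0. There exists a constant κ > 0 (depending only on H and T) such that for all 0 ≤ r ≤ s ≤ T, setting μ := (1/2)(s^{2H} + r^{2H} − (s−r)^{2H}), one has s^{2H} r^{2H} − μ² ≥ κ (s−r)^{2H} r^{2H}. -/
open Real

/-- Tangent-line (Bernoulli) inequality: for `0 < a`, `0 ≤ b`, `0 ≤ H ≤ 1`,
`(a + b) ^ H ≤ a ^ H + H * a ^ (H - 1) * b`. -/
lemma fbm_tangent {H a b : ℝ} (ha : 0 < a) (hb : 0 ≤ b) (hH0 : 0 ≤ H) (hH1 : H ≤ 1) :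
    (a + b) ^ H ≤ a ^ H + H * a ^ (H - 1) * b := by
  have hba : 0 ≤ b / a := div_nonneg hb ha.le
  have h1 : (a + b) ^ H = a ^ H * (1 + b / a) ^ H := by
    rw [← Real.mul_rpow ha.le (by positivity)]
    congr 1
    field_simp
  have h2 : (1 + b / a) ^ H ≤ 1 + H * (b / a) :=
    rpow_one_add_le_one_add_mul_self (by linarith) hH0 hH1
  have h3 : a ^ (H - 1) = a ^ H / a := by
    rw [Real.rpow_sub ha, Real.rpow_one]
  rw [h1, h3]
  have hA : 0 ≤ a ^ H := Real.rpow_nonneg ha.le H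
  calc a ^ H * (1 + b / a) ^ H ≤ a ^ H * (1 + H * (b / a)) :=
        mul_le_mul_of_nonneg_left h2 hA
    _ = a ^ H + H * (a ^ H / a) * b := by field_simp

/-- The purely algebraic core inequality. -/
lemma fbm_core {H A B U : ℝ} (hH0 : 0 < H) (hH1 : H < 1) (hB : 0 ≤ B) (hU : 0 ≤ U)
    (hBA : B ≤ A) (hUA : U ≤ A)
    (hcase : A ≤ B + H * U ∨ A ≤ U + H * B) :
    A^2 * B^2 - ((A^2 + B^2 - U^2) / 2)^2 ≥ (1 - H) / 2 * U^2 * B^2 := by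
  rcases hcase with h | h
  · have g1 : ((1 - H) * U) * U ≤ (U - (A - B)) * (U + (A - B)) := by
      apply mul_le_mul (by nlinarith) (by linarith) hU (by nlinarith)
    have g2 : B * (2 * B) ≤ ((A + B) - U) * ((A + B) + U) := by
      apply mul_le_mul (by linarith) (by linarith) (by linarith) (by linarith)
    have g3 : (((1 - H) * U) * U) * (B * (2 * B)) ≤
        ((U - (A - B)) * (U + (A - B))) * (((A + B) - U) * ((A + B) + U)) := by
      apply mul_le_mul g1 g2 (by positivity)
        (le_trans (by nlinarith [mul_nonneg hU hU]) g1)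
    nlinarith [g3]
  · have g1 : ((1 - H) * B) * U ≤ (U - (A - B)) * (U + (A - B)) := by
      apply mul_le_mul (by nlinarith) (by linarith) hU (by nlinarith)
    have g2 : B * (2 * U) ≤ ((A + B) - U) * ((A + B) + U) := by
      apply mul_le_mul (by linarith) (by linarith) (by linarith) (by linarith)
    have g3 : (((1 - H) * B) * U) * (B * (2 * U)) ≤
        ((U - (A - B)) * (U + (A - B))) * (((A + B) - U) * ((A + B) + U)) := by
      apply mul_le_mul g1 g2 (by positivity)
        (le_trans (by nlinarith [mul_nonneg hB hU]) g1)
    nlinarith [g3]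

/-- **Local nondeterminacy estimate for fractional Brownian motion.**
For `0 < H < 1` and `T > 0` there is a constant `κ > 0` such that for all
`0 ≤ r ≤ s ≤ T`, with `μ = (s^{2H} + r^{2H} - (s-r)^{2H})/2` the covariance of
`B^H_s` and `B^H_r`, one has `s^{2H} r^{2H} - μ² ≥ κ (s-r)^{2H} r^{2H}`. -/
theorem statement0 (H T : ℝ) (hH0 : 0 < H) (hH1 : H < 1) (hT : 0 < T) :
    ∃ κ : ℝ, 0 < κ ∧ ∀ r s : ℝ, 0 ≤ r → r ≤ s → s ≤ T →
      s ^ (2*H) * r ^ (2*H) -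
          ((s ^ (2*H) + r ^ (2*H) - (s - r) ^ (2*H)) / 2) ^ 2
        ≥ κ * (s - r) ^ (2*H) * r ^ (2*H) := by
  refine ⟨(1 - H) / 2, by linarith, fun r s hr hrs hsT => ?_⟩
  have hs : 0 ≤ s := hr.trans hrs
  have hu : 0 ≤ s - r := by linarith
  set A := s ^ H with hAdef
  set B := r ^ H with hBdef
  set U := (s - r) ^ H with hUdef
  have hsq : ∀ x : ℝ, 0 ≤ x → x ^ (2*H) = (x ^ H)^2 := by
    intro x hx
    rw [show (2:ℝ)*H = H*2 by ring, Real.rpow_mul hx, Real.rpow_two]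
  rw [hsq s hs, hsq r hr, hsq (s - r) hu]
  have hB : 0 ≤ B := Real.rpow_nonneg hr H
  have hU : 0 ≤ U := Real.rpow_nonneg hu H
  have hBA : B ≤ A := Real.rpow_le_rpow hr hrs hH0.le
  have hUA : U ≤ A := Real.rpow_le_rpow hu (by linarith) hH0.le
  have key : A ≤ B + H * U ∨ A ≤ U + H * B := by
    rcases eq_or_lt_of_le hr with hr0 | hr0
    · -- r = 0
      right
      have hAU : A = U := by rw [hAdef, hUdef, ← hr0, sub_zero]
      have hB0 : B = 0 := by rw [hBdef, ← hr0, Real.zero_rpow hH0.ne']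
      rw [hAU, hB0]; nlinarith [hU]
    rcases eq_or_lt_of_le hu with hu0 | hu0
    · -- s = r
      left
      have hsr : s = r := by linarith
      have hAB : A = B := by rw [hAdef, hBdef, hsr]
      have hU0 : U = 0 := by rw [hUdef, ← hu0, Real.zero_rpow hH0.ne']
      rw [hAB, hU0]; nlinarith [hB]
    rcases le_total (s - r) r with hcase | hcase
    · -- u ≤ r : tangent at r
      left
      have h1 : A ≤ B + H * (r ^ (H - 1) * (s - r)) := by
        have := fbm_tangent hr0 hu hH0.le hH1.le
        rw [show r + (s - r) = s by ring] at this
        rw [hAdef, hBdef]; linarith [this]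
      have h2 : r ^ (H - 1) * (s - r) ≤ U := by
        have hr1 : r ^ (H - 1) ≤ (s - r) ^ (H - 1) :=
          Real.rpow_le_rpow_of_nonpos hu0 hcase (by linarith)
        calc r ^ (H - 1) * (s - r) ≤ (s - r) ^ (H - 1) * (s - r) :=
              mul_le_mul_of_nonneg_right hr1 hu
          _ = U := by
              rw [hUdef, mul_comm, ← Real.rpow_one_add' hu (by intro hc; linarith)]
              ring_nf
      nlinarith [h1, h2, hH0.le]
    · -- r ≤ u : tangent at u
      right
      have h1 : A ≤ U + H * ((s - r) ^ (H - 1) * r) := by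
        have := fbm_tangent hu0 hr hH0.le hH1.le
        rw [show (s - r) + r = s by ring] at this
        rw [hAdef, hUdef]; linarith [this]
      have h2 : (s - r) ^ (H - 1) * r ≤ B := by
        have hr1 : (s - r) ^ (H - 1) ≤ r ^ (H - 1) :=
          Real.rpow_le_rpow_of_nonpos hr0 hcase (by linarith)
        calc (s - r) ^ (H - 1) * r ≤ r ^ (H - 1) * r :=
              mul_le_mul_of_nonneg_right hr1 hr
          _ = B := by
              rw [hBdef, mul_comm, ← Real.rpow_one_add' hr (by intro hc; linarith)]
              ring_nf
      nlinarith [h1, h2, hH0.le]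
  have := fbm_core hH0 hH1 hB hU hBA hUA key
  linarith [this]
end

section
/- Let 1/2 < H < 1, let κ_H := (2H·Γ(3/2−H) / (Γ(H+1/2)·Γ(2−2H)))^{1/2}, let t > 0, and let f : [0,t] → ℝ be continuous. Then for every s ∈ (0,t], κ_H² (H−1/2)² s^{H−1/2} ∫_0^s u^{1−2H} (s−u)^{H−3/2} ( ∫_u^t m^{H−1/2} (m−u)^{H−3/2} f(m) dm ) du = H(2H−1) ∫_0^t |s−u|^{2H−2} f(u) du. -/
open Real MeasureTheory Set intervalIntegral

lemma rbeta_integrable {p q : ℝ} (hp : -1 < p) (hq : -1 < q) :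
    IntegrableOn (fun x : ℝ => x ^ p * (1 - x) ^ q) (Ioo (0:ℝ) 1) := by
  have h := Complex.betaIntegral_convergent (u := (p:ℂ) + 1) (v := (q:ℂ) + 1)
    (by simp; linarith) (by simp; linarith)
  rw [intervalIntegrable_iff, uIoc_of_le zero_le_one] at h
  have h2 : IntegrableOn (fun x : ℝ =>
      ((x:ℂ) ^ ((p:ℂ) + 1 - 1) * (1 - (x:ℂ)) ^ ((q:ℂ) + 1 - 1))) (Ioo (0:ℝ) 1) :=
    h.mono_set Ioo_subset_Ioc_self
  have h3 : IntegrableOn (fun x : ℝ => (((x ^ p * (1 - x) ^ q : ℝ)) : ℂ)) (Ioo (0:ℝ) 1) := by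
    refine h2.congr_fun (fun x hx => ?_) measurableSet_Ioo
    obtain ⟨hx0, hx1⟩ := hx
    rw [add_sub_cancel_right, add_sub_cancel_right]
    push_cast
    rw [show (1 - (x:ℂ)) = ((1 - x : ℝ) : ℂ) by push_cast; ring]
    rw [← Complex.ofReal_cpow hx0.le, ← Complex.ofReal_cpow (by linarith : (0:ℝ) ≤ 1 - x)]
    try push_cast
    try ring
  have h4 := h3.re
  refine h4.congr (ae_of_all _ fun x => ?_)
  simp

lemma rbeta_integral {p q : ℝ} (hp : -1 < p) (hq : -1 < q) :
    ∫ x in Ioo (0:ℝ) 1, x ^ p * (1 - x) ^ q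
      = Real.Gamma (p+1) * Real.Gamma (q+1) / Real.Gamma (p+q+2) := by
  have h := Complex.Gamma_mul_Gamma_eq_betaIntegral (s := (p:ℂ) + 1) (t := (q:ℂ) + 1)
    (by simp; linarith) (by simp; linarith)
  have hbeta : Complex.betaIntegral ((p:ℂ)+1) ((q:ℂ)+1)
      = ((∫ x in Ioo (0:ℝ) 1, x ^ p * (1 - x) ^ q : ℝ) : ℂ) := by
    rw [Complex.betaIntegral]
    rw [show (∫ x in (0:ℝ)..1, (x:ℂ) ^ ((p:ℂ)+1-1) * (1 - (x:ℂ)) ^ ((q:ℂ)+1-1))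
        = ∫ x in (0:ℝ)..1, ((x ^ p * (1 - x) ^ q : ℝ) : ℂ) from
      intervalIntegral.integral_congr (fun x hx => by
        rw [uIcc_of_le zero_le_one] at hx
        rw [add_sub_cancel_right, add_sub_cancel_right]
        rw [show (1 - (x:ℂ)) = ((1 - x : ℝ) : ℂ) by push_cast; ring]
        rw [← Complex.ofReal_cpow hx.1,
          ← Complex.ofReal_cpow (by linarith [hx.2] : (0:ℝ) ≤ 1 - x)]
        try push_cast
        try ring)]
    rw [intervalIntegral.integral_ofReal]
    norm_cast
    rw [intervalIntegral.integral_of_le zero_le_one, integral_Ioc_eq_integral_Ioo]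
  rw [hbeta] at h
  have hc : ((p:ℂ)+1) + ((q:ℂ)+1) = ((p+q+2 : ℝ) : ℂ) := by push_cast; ring
  rw [hc] at h
  rw [show ((p:ℂ)+1) = ((p+1 : ℝ) : ℂ) by push_cast; ring,
      show ((q:ℂ)+1) = ((q+1 : ℝ) : ℂ) by push_cast; ring] at h
  rw [Complex.Gamma_ofReal, Complex.Gamma_ofReal, Complex.Gamma_ofReal] at h
  have h' : Real.Gamma (p+1) * Real.Gamma (q+1)
      = Real.Gamma (p+q+2) * ∫ x in Ioo (0:ℝ) 1, x ^ p * (1 - x) ^ q := by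
    exact_mod_cast h
  have hne : Real.Gamma (p+q+2) ≠ 0 := (Real.Gamma_pos_of_pos (by linarith)).ne'
  field_simp [hne] at h' ⊢
  linarith [h']

lemma two_factor_integrable {p q s : ℝ} (hp : -1 < p) (hq : -1 < q) (hs : 0 < s) :
    IntegrableOn (fun u : ℝ => u ^ p * (s - u) ^ q) (Ioo (0:ℝ) s) := by
  have himg : (fun x : ℝ => s * x) '' Ioo (0:ℝ) 1 = Ioo (0:ℝ) s := by
    rw [image_mul_left_Ioo hs, mul_zero, mul_one]
  have hderiv : ∀ x ∈ Ioo (0:ℝ) 1,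
      HasDerivWithinAt (fun x : ℝ => s * x) s (Ioo (0:ℝ) 1) x := fun x _ => by
    simpa using ((hasDerivAt_id x).const_mul s).hasDerivWithinAt
  have hinj : InjOn (fun x : ℝ => s * x) (Ioo (0:ℝ) 1) :=
    (mul_right_injective₀ hs.ne').injOn
  rw [← himg, integrableOn_image_iff_integrableOn_abs_deriv_smul measurableSet_Ioo hderiv hinj]
  have : IntegrableOn (fun x : ℝ => (|s| * (s ^ p * s ^ q)) * (x ^ p * (1 - x) ^ q))
      (Ioo (0:ℝ) 1) := (rbeta_integrable hp hq).const_mul _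
  refine this.congr_fun (fun x hx => ?_) measurableSet_Ioo
  obtain ⟨hx0, hx1⟩ := hx
  have h1 : (s * x) ^ p = s ^ p * x ^ p := Real.mul_rpow hs.le hx0.le
  have h2 : (s - s * x) ^ q = s ^ q * (1 - x) ^ q := by
    rw [show s - s * x = s * (1 - x) by ring, Real.mul_rpow hs.le (by linarith)]
  rw [smul_eq_mul, h1, h2]
  ring

lemma key_cov {H s m : ℝ} (hH0 : 1/2 < H) (hH1 : H < 1) (hs : 0 < s) (hm : s < m) :
    ∫ u in Ioo (0:ℝ) s, u ^ (1-2*H) * (s-u) ^ (H-3/2) * (m-u) ^ (H-3/2)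
      = (Real.Gamma (2-2*H) * Real.Gamma (H-1/2) / Real.Gamma (3/2-H))
        * (s ^ ((1:ℝ)/2-H) * m ^ ((1:ℝ)/2-H) * (m-s) ^ (2*H-2)) := by
  have hms : 0 < m - s := sub_pos.mpr hm
  have hm0 : 0 < m := hs.trans hm
  set φ : ℝ → ℝ := fun w => s * m * w / (m - s + s * w) with hφdef
  set φ' : ℝ → ℝ := fun w => s * m * (m - s) / (m - s + s * w) ^ 2 with hφ'def
  have hD : ∀ w : ℝ, 0 ≤ w → 0 < m - s + s * w := fun w hw => by nlinarith
  have himg : φ '' Ioo (0:ℝ) 1 = Ioo (0:ℝ) s := by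
    ext u
    constructor
    · rintro ⟨w, ⟨hw0, hw1⟩, rfl⟩
      have hDw := hD w hw0.le
      constructor
      · have : 0 < s * m * w := by positivity
        exact div_pos this hDw
      · rw [div_lt_iff₀ hDw]
        nlinarith [mul_pos (mul_pos hs hms) (sub_pos.mpr hw1)]
    · rintro ⟨hu0, hu1⟩
      have hmu : 0 < m - u := by linarith
      refine ⟨(m - s) * u / (s * (m - u)), ⟨?_, ?_⟩, ?_⟩
      · positivity
      · rw [div_lt_one (by positivity)]; nlinarith
      · show s * m * ((m - s) * u / (s * (m - u))) / (m - s + s * ((m - s) * u / (s * (m - u)))) = u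
        have hden : m - s + s * ((m - s) * u / (s * (m - u))) = (m - s) * m / (m - u) := by
          field_simp
          ring
        rw [hden]
        field_simp
  have hderiv : ∀ w ∈ Ioo (0:ℝ) 1, HasDerivWithinAt φ (φ' w) (Ioo (0:ℝ) 1) w := by
    intro w hw
    have hDw := hD w hw.1.le
    have h1 : HasDerivAt (fun w : ℝ => s * m * w) (s * m) w := by
      simpa using (hasDerivAt_id w).const_mul (s * m)
    have h2 : HasDerivAt (fun w : ℝ => m - s + s * w) s w := by
      simpa using ((hasDerivAt_id w).const_mul s).const_add (m - s)
    have h := h1.div h2 hDw.ne'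
    have he : (s * m * (m - s + s * w) - s * m * w * s) / (m - s + s * w) ^ 2 = φ' w := by
      rw [hφ'def]; ring_nf
    exact (he ▸ h).hasDerivWithinAt
  have hinj : InjOn φ (Ioo (0:ℝ) 1) := by
    intro w1 hw1 w2 hw2 he
    have hD1 := hD w1 hw1.1.le
    have hD2 := hD w2 hw2.1.le
    rw [hφdef] at he
    simp only [div_eq_div_iff hD1.ne' hD2.ne'] at he
    have h2 : s * m * (m - s) * w1 = s * m * (m - s) * w2 := by linear_combination he
    exact mul_left_cancel₀ (by positivity) h2
  rw [← himg, integral_image_eq_integral_abs_deriv_smul measurableSet_Ioo hderiv hinj]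
  have heqon : ∀ w ∈ Ioo (0:ℝ) 1,
      |φ' w| • (φ w ^ (1-2*H) * (s - φ w) ^ (H-3/2) * (m - φ w) ^ (H-3/2))
      = (s ^ ((1:ℝ)/2-H) * m ^ ((1:ℝ)/2-H) * (m-s) ^ (2*H-2))
          * (w ^ (1-2*H) * (1-w) ^ (H-3/2)) := by
    intro w ⟨hw0, hw1⟩
    have hw1' : 0 < 1 - w := by linarith
    have hDw : 0 < m - s + s * w := hD w hw0.le
    set D := m - s + s * w with hDdef
    have hsub1 : s - φ w = s * (m - s) * (1 - w) / D := by
      rw [hφdef]; field_simp; ring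
    have hsub2 : m - φ w = m * (m - s) / D := by
      rw [hφdef]; field_simp; ring
    have hφw : φ w = s * m * w / D := rfl
    have hφ'w : |φ' w| = s * m * (m - s) / D ^ 2 := abs_of_pos (by positivity)
    rw [smul_eq_mul, hφ'w, hφw, hsub1, hsub2]
    have e1 : (s * m * w / D) ^ (1-2*H)
        = Real.exp ((1-2*H) * (Real.log s + Real.log m + Real.log w - Real.log D)) := by
      rw [Real.rpow_def_of_pos (by positivity),
        Real.log_div (by positivity) hDw.ne',
        Real.log_mul (by positivity) hw0.ne', Real.log_mul hs.ne' hm0.ne']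
      ring_nf
    have e2 : (s * (m - s) * (1 - w) / D) ^ (H-3/2)
        = Real.exp ((H-3/2) * (Real.log s + Real.log (m-s) + Real.log (1-w) - Real.log D)) := by
      rw [Real.rpow_def_of_pos (by positivity),
        Real.log_div (by positivity) hDw.ne',
        Real.log_mul (by positivity) hw1'.ne', Real.log_mul hs.ne' hms.ne']
      ring_nf
    have e3 : (m * (m - s) / D) ^ (H-3/2)
        = Real.exp ((H-3/2) * (Real.log m + Real.log (m-s) - Real.log D)) := by
      rw [Real.rpow_def_of_pos (by positivity),
        Real.log_div (by positivity) hDw.ne', Real.log_mul hm0.ne' hms.ne']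
      ring_nf
    have e4 : s * m * (m - s) / D ^ 2
        = Real.exp (Real.log s + Real.log m + Real.log (m-s) - 2 * Real.log D) := by
      rw [Real.exp_sub, Real.exp_add, Real.exp_add, Real.exp_log hs, Real.exp_log hm0,
        Real.exp_log hms, show (2:ℝ) * Real.log D = Real.log D + Real.log D by ring,
        Real.exp_add, Real.exp_log hDw]
      ring
    have e5 : s ^ ((1:ℝ)/2-H) = Real.exp (((1:ℝ)/2-H) * Real.log s) :=
      (Real.rpow_def_of_pos hs _).trans (by rw [mul_comm])
    have e6 : m ^ ((1:ℝ)/2-H) = Real.exp (((1:ℝ)/2-H) * Real.log m) :=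
      (Real.rpow_def_of_pos hm0 _).trans (by rw [mul_comm])
    have e7 : (m-s) ^ (2*H-2) = Real.exp ((2*H-2) * Real.log (m-s)) :=
      (Real.rpow_def_of_pos hms _).trans (by rw [mul_comm])
    have e8 : w ^ (1-2*H) = Real.exp ((1-2*H) * Real.log w) :=
      (Real.rpow_def_of_pos hw0 _).trans (by rw [mul_comm])
    have e9 : (1-w) ^ (H-3/2) = Real.exp ((H-3/2) * Real.log (1-w)) :=
      (Real.rpow_def_of_pos hw1' _).trans (by rw [mul_comm])
    rw [e1, e2, e3, e4, e5, e6, e7, e8, e9]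
    rw [← Real.exp_add, ← Real.exp_add, ← Real.exp_add, ← Real.exp_add, ← Real.exp_add,
      ← Real.exp_add, ← Real.exp_add]
    congr 1
    ring
  rw [setIntegral_congr_fun measurableSet_Ioo heqon, MeasureTheory.integral_const_mul,
    rbeta_integral (by linarith) (by linarith)]
  rw [show (1-2*H) + 1 = 2-2*H by ring, show (H-3/2) + 1 = H-1/2 by ring,
    show (1-2*H) + (H-3/2) + 2 = 3/2-H by ring]
  ring

lemma key_min {H s m : ℝ} (hH0 : 1/2 < H) (hH1 : H < 1) (hs : 0 < s) (hm0 : 0 < m)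
    (hne : m ≠ s) :
    ∫ u in Ioo (0:ℝ) (min s m), u ^ (1-2*H) * (s-u) ^ (H-3/2) * (m-u) ^ (H-3/2)
      = (Real.Gamma (2-2*H) * Real.Gamma (H-1/2) / Real.Gamma (3/2-H))
        * (s ^ ((1:ℝ)/2-H) * m ^ ((1:ℝ)/2-H) * |s-m| ^ (2*H-2)) := by
  rcases hne.lt_or_gt with h | h
  · -- m < s
    rw [min_eq_right h.le]
    rw [show |s - m| = s - m from abs_of_pos (by linarith)]
    rw [setIntegral_congr_fun measurableSet_Ioo
      (g := fun u => u ^ (1-2*H) * (m-u) ^ (H-3/2) * (s-u) ^ (H-3/2))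
      (fun u _ => by ring)]
    rw [key_cov hH0 hH1 hm0 h]
    ring
  · -- s < m
    rw [min_eq_left h.le]
    rw [show |s - m| = m - s by rw [abs_of_neg (by linarith : s - m < 0)]; ring]
    rw [key_cov hH0 hH1 hs h]

lemma scalar_id (a G1 G2 Gh P Q I : ℝ) (h1 : G1 ≠ 0) (h2 : G2 ≠ 0) (h3 : Gh ≠ 0)
    (h4 : a ≠ 0) (hss : P * Q = 1) :
    2 * (a + 1/2) * G1 / (a * Gh * G2) * a ^ 2 * P * (G2 * Gh / G1 * Q * I)
      = (a + 1/2) * (2 * (a + 1/2) - 1) * I := by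
  field_simp
  linear_combination (2 * a * (2 * a + 1) * I) * hss

lemma core (H : ℝ) (hH0 : 1/2 < H) (hH1 : H < 1) (t : ℝ) (ht : 0 < t)
    (g : ℝ → ℝ) (hg : Continuous g) (M : ℝ) (hM : ∀ x, |g x| ≤ M)
    (s : ℝ) (hs0 : 0 < s) (hst : s ≤ t) :
    ((2 * H * Real.Gamma (3/2 - H) /
        (Real.Gamma (H + 1/2) * Real.Gamma (2 - 2*H))) ^ ((1:ℝ)/2)) ^ 2
        * (H - 1/2) ^ 2 * s ^ (H - 1/2) *
        ∫ u in (0:ℝ)..s, u ^ (1 - 2*H) * (s - u) ^ (H - 3/2) *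
          ∫ m in u..t, m ^ (H - 1/2) * (m - u) ^ (H - 3/2) * g m
      = H * (2*H - 1) * ∫ u in (0:ℝ)..t, |s - u| ^ (2*H - 2) * g u := by
  have hM0 : 0 ≤ M := le_trans (abs_nonneg _) (hM 0)
  set K : ℝ → ℝ → ℝ := fun u m =>
    if u < m then u ^ (1 - 2*H) * (s - u) ^ (H - 3/2)
      * (m ^ (H - 1/2) * (m - u) ^ (H - 3/2) * g m) else 0 with hK
  set ν : Measure ℝ := volume.restrict (Ioo 0 t) with hν
  set μ : Measure ℝ := volume.restrict (Ioo 0 s) with hμ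
  -- slice integrability
  have hslice : ∀ u ∈ Ioo (0:ℝ) s, Integrable (fun m => K u m) ν := by
    intro u hu
    obtain ⟨hu0, hus⟩ := hu
    have hut : u < t := lt_of_lt_of_le hus hst
    have hIoi : (fun m => K u m) = (Ioi u).indicator (fun m =>
        u ^ (1 - 2*H) * (s - u) ^ (H - 3/2)
          * (m ^ (H - 1/2) * (m - u) ^ (H - 3/2) * g m)) := by
      funext m
      simp only [hK, indicator_apply, mem_Ioi]
    rw [hIoi, integrable_indicator_iff measurableSet_Ioi, IntegrableOn, hν,
      Measure.restrict_restrict measurableSet_Ioi,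
      show Ioi u ∩ Ioo 0 t = Ioo u t by
        ext x
        simp only [mem_inter_iff, mem_Ioi, mem_Ioo]
        constructor
        · rintro ⟨h1, _, h3⟩; exact ⟨h1, h3⟩
        · rintro ⟨h1, h2⟩; exact ⟨h1, hu0.trans h1, h2⟩]
    apply Integrable.const_mul
    have base : IntervalIntegrable (fun x : ℝ => x ^ (H - 3/2)) volume 0 (t - u) :=
      intervalIntegral.intervalIntegrable_rpow' (by linarith)
    have shift : IntervalIntegrable (fun m : ℝ => (m - u) ^ (H - 3/2)) volume u t := by
      simpa using base.comp_sub_right u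
    have hIoo := (intervalIntegrable_iff_integrableOn_Ioo_of_le hut.le).mp shift
    have hbdd : Integrable (fun m => (m ^ (H - 1/2) * g m) * (m - u) ^ (H - 3/2))
        (volume.restrict (Ioo u t)) := by
      apply hIoo.bdd_mul (c := t ^ (H - 1/2) * M)
      · exact (by fun_prop : Measurable fun m : ℝ => m ^ (H - 1/2) * g m).aestronglyMeasurable
      · filter_upwards [ae_restrict_mem measurableSet_Ioo] with m hm
        obtain ⟨hm1, hm2⟩ := hm
        have hm0 : 0 < m := hu0.trans hm1
        rw [Real.norm_eq_abs, abs_mul, abs_of_pos (Real.rpow_pos_of_pos hm0 _)]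
        exact mul_le_mul (Real.rpow_le_rpow hm0.le hm2.le (by linarith)) (hM m)
          (abs_nonneg _) (Real.rpow_nonneg ht.le _)
    exact hbdd.congr (ae_of_all _ fun m => by ring)
  have mK : Measurable (Function.uncurry K) := by
    apply Measurable.ite (measurableSet_lt measurable_fst measurable_snd) _ measurable_const
    fun_prop
  have hshift : ∀ u : ℝ, 0 < u → u < t →
      IntegrableOn (fun m : ℝ => (m - u) ^ (H - 3/2)) (Ioo u t) := by
    intro u hu0 hut
    have base : IntervalIntegrable (fun x : ℝ => x ^ (H - 3/2)) volume 0 (t - u) :=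
      intervalIntegral.intervalIntegrable_rpow' (by linarith)
    exact (intervalIntegrable_iff_integrableOn_Ioo_of_le hut.le).mp
      (by simpa using base.comp_sub_right u)
  have hIoiIoo : ∀ u : ℝ, 0 < u → Ioi u ∩ Ioo 0 t = Ioo u t := by
    intro u hu0
    ext x
    simp only [mem_inter_iff, mem_Ioi, mem_Ioo]
    constructor
    · rintro ⟨h1, _, h3⟩; exact ⟨h1, h3⟩
    · rintro ⟨h1, h2⟩; exact ⟨h1, hu0.trans h1, h2⟩
  have hrpow_int : ∀ u : ℝ, 0 < u → u < t →
      ∫ m in Ioo u t, (m - u) ^ (H - 3/2) = (t - u) ^ (H - 1/2) / (H - 1/2) := by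
    intro u hu0 hut
    rw [← integral_Ioc_eq_integral_Ioo, ← intervalIntegral.integral_of_le hut.le,
      intervalIntegral.integral_comp_sub_right (fun x => x ^ (H - 3/2)) u, sub_self,
      integral_rpow (Or.inl (by linarith))]
    rw [Real.zero_rpow (ne_of_gt (by linarith : (0:ℝ) < H - 3/2 + 1)),
      show H - 3/2 + 1 = H - 1/2 by ring, sub_zero]
  have hKint : Integrable (Function.uncurry K) (μ.prod ν) := by
    rw [integrable_prod_iff mK.aestronglyMeasurable]
    constructor
    · rw [hμ]
      filter_upwards [ae_restrict_mem measurableSet_Ioo] with u hu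
      exact hslice u hu
    · apply Integrable.mono'
        (g := fun u : ℝ => (u ^ (1 - 2*H) * (s - u) ^ (H - 3/2))
          * (t ^ (H - 1/2) * M * (t ^ (H - 1/2) / (H - 1/2))))
      · exact (two_factor_integrable (by linarith) (by linarith) hs0).mul_const _
      · exact (mK.norm.aestronglyMeasurable).integral_prod_right'
      · rw [hμ]
        filter_upwards [ae_restrict_mem measurableSet_Ioo] with u hu
        obtain ⟨hu0, hus⟩ := hu
        have hut : u < t := lt_of_lt_of_le hus hst
        have hcu : (0:ℝ) ≤ u ^ (1 - 2*H) * (s - u) ^ (H - 3/2) :=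
          mul_nonneg (Real.rpow_nonneg hu0.le _) (Real.rpow_nonneg (by linarith) _)
        rw [Real.norm_eq_abs,
          abs_of_nonneg (integral_nonneg fun m => norm_nonneg _)]
        have hind : Integrable ((Ioi u).indicator (fun m : ℝ => (m - u) ^ (H - 3/2))) ν := by
          rw [integrable_indicator_iff measurableSet_Ioi, IntegrableOn, hν,
            Measure.restrict_restrict measurableSet_Ioi, hIoiIoo u hu0]
          exact hshift u hu0 hut
        have hmono : ∫ m, ‖K u m‖ ∂ν
            ≤ ∫ m, (u ^ (1 - 2*H) * (s - u) ^ (H - 3/2) * (t ^ (H - 1/2) * M))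
                * (Ioi u).indicator (fun m : ℝ => (m - u) ^ (H - 3/2)) m ∂ν := by
          apply integral_mono_ae ((hslice u ⟨hu0, hus⟩).norm) (hind.const_mul _)
          rw [hν]
          filter_upwards [ae_restrict_mem measurableSet_Ioo] with m hm
          obtain ⟨hm0, hmt⟩ := hm
          by_cases hum : u < m
          · rw [hK]
            simp only [Function.uncurry, if_pos hum, indicator_apply, mem_Ioi, if_pos hum]
            have h1 : 0 < m - u := by linarith
            have hB : |m ^ (H - 1/2) * (m - u) ^ (H - 3/2) * g m|
                ≤ t ^ (H - 1/2) * (m - u) ^ (H - 3/2) * M := by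
              rw [abs_mul, abs_mul, abs_of_nonneg (Real.rpow_nonneg hm0.le _),
                abs_of_nonneg (Real.rpow_nonneg h1.le _)]
              have e1 : m ^ (H - 1/2) ≤ t ^ (H - 1/2) :=
                Real.rpow_le_rpow hm0.le hmt.le (by linarith)
              have e2 : |g m| ≤ M := hM m
              have e3 : (0:ℝ) ≤ (m - u) ^ (H - 3/2) := Real.rpow_nonneg h1.le _
              have e4 : (0:ℝ) ≤ t ^ (H - 1/2) := Real.rpow_nonneg (by linarith) _
              exact mul_le_mul (mul_le_mul e1 le_rfl e3 e4) e2 (abs_nonneg _)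
                (mul_nonneg e4 e3)
            rw [Real.norm_eq_abs, abs_mul, abs_of_nonneg hcu]
            calc u ^ (1 - 2*H) * (s - u) ^ (H - 3/2)
                  * |m ^ (H - 1/2) * (m - u) ^ (H - 3/2) * g m|
                ≤ u ^ (1 - 2*H) * (s - u) ^ (H - 3/2)
                  * (t ^ (H - 1/2) * (m - u) ^ (H - 3/2) * M) :=
                  mul_le_mul_of_nonneg_left hB hcu
              _ = u ^ (1 - 2*H) * (s - u) ^ (H - 3/2) * (t ^ (H - 1/2) * M)
                  * (m - u) ^ (H - 3/2) := by ring
          · rw [hK]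
            simp only [Function.uncurry, if_neg hum, indicator_apply, mem_Ioi, if_neg hum]
            simp
        refine hmono.trans ?_
        rw [MeasureTheory.integral_const_mul, hν, setIntegral_indicator measurableSet_Ioi,
          show Ioo 0 t ∩ Ioi u = Ioo u t by rw [inter_comm]; exact hIoiIoo u hu0,
          hrpow_int u hu0 hut]
        have h2 : (t - u) ^ (H - 1/2) / (H - 1/2) ≤ t ^ (H - 1/2) / (H - 1/2) := by
          gcongr <;> linarith
        calc u ^ (1 - 2*H) * (s - u) ^ (H - 3/2) * (t ^ (H - 1/2) * M)
              * ((t - u) ^ (H - 1/2) / (H - 1/2))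
            ≤ u ^ (1 - 2*H) * (s - u) ^ (H - 3/2) * (t ^ (H - 1/2) * M)
              * (t ^ (H - 1/2) / (H - 1/2)) := by
              refine mul_le_mul_of_nonneg_left h2 ?_
              exact mul_nonneg hcu (mul_nonneg (Real.rpow_nonneg (by linarith) _) hM0)
          _ = u ^ (1 - 2*H) * (s - u) ^ (H - 3/2)
              * (t ^ (H - 1/2) * M * (t ^ (H - 1/2) / (H - 1/2))) := by ring
  have hLHS : (∫ u in (0:ℝ)..s, u ^ (1 - 2*H) * (s - u) ^ (H - 3/2) *
        ∫ m in u..t, m ^ (H - 1/2) * (m - u) ^ (H - 3/2) * g m)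
      = ∫ u, (∫ m, K u m ∂ν) ∂μ := by
    rw [hμ, intervalIntegral.integral_of_le hs0.le, integral_Ioc_eq_integral_Ioo]
    apply setIntegral_congr_fun measurableSet_Ioo
    intro u hu
    obtain ⟨hu0, hus⟩ := hu
    dsimp only
    have hut : u < t := lt_of_lt_of_le hus hst
    have hKind : (fun m => K u m) = (Ioi u).indicator (fun m =>
        u ^ (1 - 2*H) * (s - u) ^ (H - 3/2)
          * (m ^ (H - 1/2) * (m - u) ^ (H - 3/2) * g m)) := by
      funext m
      simp only [hK, indicator_apply, mem_Ioi]
    rw [intervalIntegral.integral_of_le hut.le, integral_Ioc_eq_integral_Ioo, hν, hKind,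
      MeasureTheory.integral_indicator measurableSet_Ioi, Measure.restrict_restrict measurableSet_Ioi,
      hIoiIoo u hu0, MeasureTheory.integral_const_mul]
  have hsne : ∀ᵐ m ∂ν, m ≠ s := by
    have h1 : ∀ᵐ m ∂(volume : Measure ℝ), m ≠ s := by
      rw [ae_iff, show {m : ℝ | ¬ m ≠ s} = {s} by ext x; simp]
      exact measure_singleton s
    exact h1.filter_mono (ae_mono Measure.restrict_le_self)
  have hae : ∀ᵐ m ∂ν, (∫ u, K u m ∂μ)
      = (Real.Gamma (2 - 2*H) * Real.Gamma (H - 1/2) / Real.Gamma (3/2 - H))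
          * s ^ ((1:ℝ)/2 - H) * (|s - m| ^ (2*H - 2) * g m) := by
    rw [hν]
    filter_upwards [ae_restrict_mem measurableSet_Ioo,
      hsne.filter_mono (le_of_eq (by rw [hν]))] with m hm hmne
    obtain ⟨hm0, hmt⟩ := hm
    have hKind2 : (fun u => K u m) = (Iio m).indicator (fun u =>
        u ^ (1 - 2*H) * (s - u) ^ (H - 3/2)
          * (m ^ (H - 1/2) * (m - u) ^ (H - 3/2) * g m)) := by
      funext u
      simp only [hK, indicator_apply, mem_Iio]
    rw [hKind2, hμ, MeasureTheory.integral_indicator measurableSet_Iio,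
      Measure.restrict_restrict measurableSet_Iio,
      show Iio m ∩ Ioo 0 s = Ioo 0 (min s m) by
        ext x
        simp only [mem_inter_iff, mem_Iio, mem_Ioo, lt_min_iff]
        tauto]
    rw [setIntegral_congr_fun measurableSet_Ioo
      (g := fun u => m ^ (H - 1/2) * g m
        * (u ^ (1 - 2*H) * (s - u) ^ (H - 3/2) * (m - u) ^ (H - 3/2)))
      (fun u _ => by ring)]
    rw [MeasureTheory.integral_const_mul, key_min hH0 hH1 hs0 hm0 hmne]
    have hmm : m ^ (H - 1/2) * m ^ ((1:ℝ)/2 - H) = 1 := by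
      rw [← Real.rpow_add hm0]
      norm_num
    linear_combination (Real.Gamma (2 - 2*H) * Real.Gamma (H - 1/2) / Real.Gamma (3/2 - H))
      * s ^ ((1:ℝ)/2 - H) * |s - m| ^ (2*H - 2) * g m * hmm
  rw [hLHS, integral_integral_swap hKint, integral_congr_ae hae,
    MeasureTheory.integral_const_mul, intervalIntegral.integral_of_le ht.le,
    integral_Ioc_eq_integral_Ioo, hν]
  have hG1 : (0:ℝ) < Real.Gamma (3/2 - H) := Real.Gamma_pos_of_pos (by linarith)
  have hG2 : (0:ℝ) < Real.Gamma (H + 1/2) := Real.Gamma_pos_of_pos (by linarith)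
  have hG3 : (0:ℝ) < Real.Gamma (2 - 2*H) := Real.Gamma_pos_of_pos (by linarith)
  have hG4 : (0:ℝ) < Real.Gamma (H - 1/2) := Real.Gamma_pos_of_pos (by linarith)
  have hb : (0:ℝ) ≤ 2 * H * Real.Gamma (3/2 - H)
      / (Real.Gamma (H + 1/2) * Real.Gamma (2 - 2*H)) := by
    apply div_nonneg _ (le_of_lt (mul_pos hG2 hG3))
    have : (0:ℝ) < 2 * H := by linarith
    exact le_of_lt (mul_pos this hG1)
  have hκ : ((2 * H * Real.Gamma (3/2 - H) /
      (Real.Gamma (H + 1/2) * Real.Gamma (2 - 2*H))) ^ ((1:ℝ)/2)) ^ 2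
      = 2 * H * Real.Gamma (3/2 - H) / (Real.Gamma (H + 1/2) * Real.Gamma (2 - 2*H)) := by
    rw [← Real.rpow_natCast (_ ^ ((1:ℝ)/2)) 2, ← Real.rpow_mul hb]
    norm_num
  have hss : s ^ (H - 1/2) * s ^ ((1:ℝ)/2 - H) = 1 := by
    rw [← Real.rpow_add hs0]
    norm_num
  have hGa : Real.Gamma (H + 1/2) = (H - 1/2) * Real.Gamma (H - 1/2) := by
    rw [show H + 1/2 = (H - 1/2) + 1 by ring,
      Real.Gamma_add_one (ne_of_gt (by linarith : (0:ℝ) < H - 1/2))]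
  rw [hκ, hGa]
  linear_combination scalar_id (H - 1/2) (Real.Gamma (3/2 - H)) (Real.Gamma (2 - 2*H))
    (Real.Gamma (H - 1/2)) (s ^ (H - 1/2)) (s ^ ((1:ℝ)/2 - H))
    (∫ (m : ℝ) in Ioo (0:ℝ) t, |s - m| ^ (2*H - 2) * g m)
    hG1.ne' hG3.ne' hG4.ne' (ne_of_gt (by linarith : (0:ℝ) < H - 1/2)) hss


/-- **Composition of the fBm transfer operator with its adjoint.**
For `1/2 < H < 1`, with `κ_H = (2H Γ(3/2-H) / (Γ(H+1/2) Γ(2-2H)))^{1/2}`,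
for every continuous `f : [0,t] → ℝ` and every `s ∈ (0,t]`,
`Γ_{H,t}Γ_{H,t}^* f(s) = H(2H-1) ∫_0^t |s-u|^{2H-2} f(u) du`,
the left-hand side written as an explicit iterated integral. -/
theorem statement2 (H : ℝ) (hH0 : 1/2 < H) (hH1 : H < 1) (t : ℝ) (ht : 0 < t)
    (f : ℝ → ℝ) (hf : ContinuousOn f (Set.Icc 0 t)) (s : ℝ) (hs : s ∈ Set.Ioc 0 t) :
    ((2 * H * Real.Gamma (3/2 - H) /
        (Real.Gamma (H + 1/2) * Real.Gamma (2 - 2*H))) ^ ((1:ℝ)/2)) ^ 2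
        * (H - 1/2) ^ 2 * s ^ (H - 1/2) *
        ∫ u in (0:ℝ)..s, u ^ (1 - 2*H) * (s - u) ^ (H - 3/2) *
          ∫ m in u..t, m ^ (H - 1/2) * (m - u) ^ (H - 3/2) * f m
      = H * (2*H - 1) * ∫ u in (0:ℝ)..t, |s - u| ^ (2*H - 2) * f u := by
  obtain ⟨hs0, hst⟩ := hs
  obtain ⟨g, hg, hgeq, M, hM⟩ : ∃ g : ℝ → ℝ, Continuous g
      ∧ (∀ x ∈ Set.Icc 0 t, g x = f x) ∧ ∃ M, ∀ x, |g x| ≤ M := by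
    refine ⟨Set.IccExtend ht.le ((Set.Icc 0 t).restrict f), ?_, ?_, ?_⟩
    · exact (hf.restrict).Icc_extend'
    · intro x hx
      exact Set.IccExtend_of_mem ht.le _ hx
    · obtain ⟨M, hMb⟩ := (isCompact_Icc (a := (0:ℝ)) (b := t)).exists_bound_of_continuousOn hf
      refine ⟨M, fun x => ?_⟩
      have h1 := hMb _ (Set.projIcc (0:ℝ) t ht.le x).2
      rw [Real.norm_eq_abs] at h1
      exact h1
  have key := core H hH0 hH1 t ht g hg M hM s hs0 hst
  have hL : (∫ u in (0:ℝ)..s, u ^ (1 - 2*H) * (s - u) ^ (H - 3/2) *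
        ∫ m in u..t, m ^ (H - 1/2) * (m - u) ^ (H - 3/2) * f m)
      = ∫ u in (0:ℝ)..s, u ^ (1 - 2*H) * (s - u) ^ (H - 3/2) *
        ∫ m in u..t, m ^ (H - 1/2) * (m - u) ^ (H - 3/2) * g m := by
    apply intervalIntegral.integral_congr
    intro u hu
    rw [uIcc_of_le hs0.le] at hu
    have h1 : (∫ m in u..t, m ^ (H - 1/2) * (m - u) ^ (H - 3/2) * f m)
        = ∫ m in u..t, m ^ (H - 1/2) * (m - u) ^ (H - 3/2) * g m := by
      apply intervalIntegral.integral_congr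
      intro m hm
      rw [uIcc_of_le (le_trans hu.2 hst)] at hm
      dsimp only
      rw [hgeq m ⟨le_trans hu.1 hm.1, hm.2⟩]
    dsimp only
    rw [h1]
  have hR : (∫ u in (0:ℝ)..t, |s - u| ^ (2*H - 2) * f u)
      = ∫ u in (0:ℝ)..t, |s - u| ^ (2*H - 2) * g u := by
    apply intervalIntegral.integral_congr
    intro u hu
    rw [uIcc_of_le ht.le] at hu
    dsimp only
    rw [hgeq u hu]
  rw [hL, hR]
  exact key
end
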